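/- Consider a sequence of swaps in which agent I eventually obtains x, with z the object agent I trades in the last swap, and suppose object y, initially held by agent j, is swapped with z over the edge {i−1,i} before z reaches agent I. Then every object w that is swapped with y before the swap of y and z has type belonging to {2,3,…,j−i+1}. -/

import Mathlib

/-- The setting of the swap-dynamics model with `N` agents `0, 1, ..., N-1` and
`N` objects, object `j` being the object initially held by agent `j`.
Each agent has a preference list (a duplicate-free list of objects, most preferred
first), and the agents form a social network given by a simple graph. -/
structure SwapModel (N : ℕ) where
  /-- the preference list of each agent -/
  pref : Fin N → List (Fin N)
  nodup : ∀ i, (pref i).Nodup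
  /-- the underlying social network -/
  G : SimpleGraph (Fin N)

namespace SwapModel

variable {N : ℕ}

/-- Agent `i` prefers object `u` to object `v`: both appear on her preference list
and `u` appears (strictly) earlier. -/
def Prefers (M : SwapModel N) (i u v : Fin N) : Prop :=
  ∃ k l : ℕ, k < l ∧ (M.pref i)[k]? = some u ∧ (M.pref i)[l]? = some v

/-- An assignment: a bijection mapping every agent to an object on her list. -/
def IsAssignment (M : SwapModel N) (σ : Fin N → Fin N) : Prop :=
  Function.Bijective σ ∧ ∀ i, σ i ∈ M.pref i

/-- `(σ 0, σ 1, …, σ t)` is a sequence of swaps: each next assignment arises from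
the previous one by performing a swap between two adjacent agents, each of whom
prefers the object of the other agent. -/
def IsSwapSeq (M : SwapModel N) (t : ℕ) (σ : ℕ → Fin N → Fin N) : Prop :=
  M.IsAssignment (σ 0) ∧
    ∀ k, k < t → ∃ i j : Fin N, M.G.Adj i j ∧
      M.Prefers i (σ k j) (σ k i) ∧ M.Prefers j (σ k i) (σ k j) ∧
      σ (k + 1) = σ k ∘ Equiv.swap i j

end SwapModel

/-- A swap: agent `a1` gives object `o1` to agent `a2` and receives object `o2`;
this records the swap `τ = {{a1, o1}, {a2, o2}}`. -/
structure Swap (N : ℕ) where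
  a1 : Fin N
  o1 : Fin N
  a2 : Fin N
  o2 : Fin N

namespace SwapModel

variable {N : ℕ}

/-- The assignment `σ` admits the swap `τ`. -/
def Admitted (M : SwapModel N) (σ : Fin N → Fin N) (τ : Swap N) : Prop :=
  σ τ.a1 = τ.o1 ∧ σ τ.a2 = τ.o2 ∧ M.G.Adj τ.a1 τ.a2 ∧
    M.Prefers τ.a1 τ.o2 τ.o1 ∧ M.Prefers τ.a2 τ.o1 τ.o2

/-- The assignment obtained from `σ` by performing the swap `τ`. -/
def applySwap (σ : Fin N → Fin N) (τ : Swap N) : Fin N → Fin N :=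
  σ ∘ Equiv.swap τ.a1 τ.a2

/-- The assignment obtained from `σ` by performing a sequence of swaps. -/
def applySeq (σ : Fin N → Fin N) : List (Swap N) → (Fin N → Fin N)
  | [] => σ
  | τ :: φ => applySeq (applySwap σ τ) φ

/-- `φ` is a valid swap sequence for the start assignment `σ`. -/
def ValidSeq (M : SwapModel N) (σ : Fin N → Fin N) : List (Swap N) → Prop
  | [] => True
  | τ :: φ => M.Admitted σ τ ∧ M.ValidSeq (applySwap σ τ) φ

/-- Object `x` is reachable for agent `I` from the initial assignment `σ0`. -/
def Reachable (M : SwapModel N) (σ0 : Fin N → Fin N) (I x : Fin N) : Prop :=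
  ∃ φ : List (Swap N), M.ValidSeq σ0 φ ∧ applySeq σ0 φ I = x

end SwapModel

/-- The path graph on `N` agents: agents `i` and `i+1` are adjacent. -/
def pathGraph' (N : ℕ) : SimpleGraph (Fin N) where
  Adj i j := i.val + 1 = j.val ∨ j.val + 1 = i.val
  symm := ⟨by intro i j h; exact h.symm⟩
  loopless := ⟨by intro i h; rcases h with h | h <;> omega⟩

/-- Swap `τ` exchanges the objects `u` and `v`. -/
def Swap.exchanges {N : ℕ} (τ : Swap N) (u v : Fin N) : Prop :=
  (τ.o1 = u ∧ τ.o2 = v) ∨ (τ.o1 = v ∧ τ.o2 = u)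

/-- Swap `τ` takes place over the edge `{j, j+1}` of the path
(agents here being indexed by their `Fin` value). -/
def Swap.onEdge {N : ℕ} (τ : Swap N) (j : ℕ) : Prop :=
  (τ.a1.val = j ∧ τ.a2.val = j + 1) ∨ (τ.a2.val = j ∧ τ.a1.val = j + 1)

namespace SwapModel

variable {N : ℕ}

/-- Objects `x` and `y` can possibly be swapped over the edge with left endpoint `j`
in some sequence of swaps (starting from `σ0`) after which agent `I` holds `x`. -/
def CanSwapXOver (M : SwapModel N) (σ0 : Fin N → Fin N) (I x y : Fin N) (j : ℕ) : Prop :=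
  ∃ φ : List (Swap N), M.ValidSeq σ0 φ ∧ applySeq σ0 φ I = x ∧
    ∃ τ ∈ φ, τ.exchanges x y ∧ τ.onEdge j

/-- Object `y` has type `t` (with respect to target agent `I` and target object `x`):
for `t ≥ 1`, the unique edge over which `y` and `x` can possibly be swapped is the
edge `{I+t-1, I+t}` (the edge of index `t`); `t = 0` if no such edge exists. -/
def HasType (M : SwapModel N) (σ0 : Fin N → Fin N) (I x y : Fin N) (t : ℕ) : Prop :=
  (t = 0 ∧ ∀ j, ¬ M.CanSwapXOver σ0 I x y j) ∨
    (1 ≤ t ∧ M.CanSwapXOver σ0 I x y (I.val + t - 1) ∧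
      ∀ j, M.CanSwapXOver σ0 I x y j → j = I.val + t - 1)

end SwapModel

namespace SwapModel

variable {N : ℕ}

/-- A solution: a valid sequence of swaps after which agent `I` holds `x`, whose last
swap gives object `x` to agent `I` in exchange for object `z`. -/
def Solution (M : SwapModel N) (σ0 : Fin N → Fin N) (I x z : Fin N)
    (φ : List (Swap N)) : Prop :=
  M.ValidSeq σ0 φ ∧ applySeq σ0 φ I = x ∧
    ∃ (φ₀ : List (Swap N)) (τ : Swap N), φ = φ₀ ++ [τ] ∧
      ((τ.a1 = I ∧ τ.o1 = z ∧ τ.o2 = x) ∨ (τ.a2 = I ∧ τ.o2 = z ∧ τ.o1 = x))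

/-- Objects `z` and `y` can possibly be swapped over the edge with left endpoint `j`
in some solution. -/
def CanSwapZOver (M : SwapModel N) (σ0 : Fin N → Fin N) (I x z y : Fin N) (j : ℕ) : Prop :=
  ∃ φ : List (Swap N), M.Solution σ0 I x z φ ∧ ∃ τ ∈ φ, τ.exchanges z y ∧ τ.onEdge j

/-- Object `y` (of type `α`) has subtype `r`: the unique edge `e` over which `y` and `z`
can possibly be swapped exists, and `α ≤ h + 1` where `h` is the number of edges between
the agent initially holding `y` and the edge `e`. -/
def SubtypeR (M : SwapModel N) (σ0 : Fin N → Fin N) (I x z y : Fin N) (α : ℕ) : Prop :=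
  ∃ e : ℕ, M.CanSwapZOver σ0 I x z y e ∧ (∀ j, M.CanSwapZOver σ0 I x z y j → j = e) ∧
    ∀ a : Fin N, σ0 a = y →
      α ≤ (if a.val ≤ e then e - a.val else a.val - (e + 1)) + 1

/-- Object `y` (of type `α`) has subtype `ℓ`. -/
def SubtypeL (M : SwapModel N) (σ0 : Fin N → Fin N) (I x z y : Fin N) (α : ℕ) : Prop :=
  ¬ M.SubtypeR σ0 I x z y α

/-- Object `y` is swapped with object `x` during the sequence `φ`. -/
def SwappedWithX (φ : List (Swap N)) (x y : Fin N) : Prop :=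
  ∃ τ ∈ φ, τ.exchanges x y

end SwapModel


/-!
Every swap exchanges the objects of two neighbouring agents and makes both of them strictly
better off, so no agent ever gets back an object she has given away. On a path this forces every
object to move monotonically, and two objects swap at most once.

The target `x` starts at the top and walks down to `I`, crossing every edge `j ≥ I` exactly once,
against an object `v_j` moving up; `v_I = z`, and `v_j` lies left of `v_{j'}` for `j < j'`. The
object `w` that meets `y` before `z` does is some `v_{j₀}` with `j₀ > I`, and its type is
`j₀ - I + 1`: if two solutions swapped `w` and `x` over different edges, the agent between them
would get `w` for `x` in one and `x` for `w` in the other. Finally `y` moves down and meets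
`v_{j₀}, …, v_I = z` in this order on strictly decreasing edges, so the edge of `w` and `y` lies
at least `j₀ - I` above `e`, and below the starting place `jA` of `y`.
-/

open Function

section FirstPassage

variable {α : Type*} [LinearOrder α] {f : ℕ → α} {a b : ℕ} {q : α}

theorem exists_le_lt_succ (hab : a ≤ b) (ha : f a ≤ q) (hb : q < f b) :
    ∃ r, a ≤ r ∧ r < b ∧ f r ≤ q ∧ q < f (r + 1) := by
  induction b, hab using Nat.le_induction with
  | base => exact absurd hb (not_lt.2 ha)
  | succ b hab ih =>
    by_cases hq : q < f b
    · obtain ⟨r, h1, h2, h3⟩ := ih hq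
      exact ⟨r, h1, by omega, h3⟩
    · exact ⟨b, hab, by omega, not_lt.1 hq, hb⟩

theorem exists_lt_le_succ (hab : a ≤ b) (ha : q ≤ f a) (hb : f b < q) :
    ∃ r, a ≤ r ∧ r < b ∧ q ≤ f r ∧ f (r + 1) < q :=
  exists_le_lt_succ (f := OrderDual.toDual ∘ f) hab ha hb

end FirstPassage

section DiscreteIVT

variable {f : ℕ → ℕ} {a b q : ℕ}

theorem exists_eq_of_succ_le_add_one (hf : ∀ t, f (t + 1) ≤ f t + 1) (hab : a ≤ b)
    (ha : f a ≤ q) (hb : q ≤ f b) : ∃ m, a ≤ m ∧ m ≤ b ∧ f m = q := by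
  induction b, hab using Nat.le_induction with
  | base => exact ⟨a, le_rfl, le_rfl, le_antisymm ha hb⟩
  | succ b hab ih =>
    by_cases hq : q ≤ f b
    · obtain ⟨m, h1, h2, h3⟩ := ih hq
      exact ⟨m, h1, by omega, h3⟩
    · exact ⟨b + 1, by omega, le_rfl, by have := hf b; omega⟩

theorem exists_eq_of_le_succ_add_one (hf : ∀ t, f t ≤ f (t + 1) + 1) (hab : a ≤ b)
    (hb : f b ≤ q) (ha : q ≤ f a) : ∃ m, a ≤ m ∧ m ≤ b ∧ f m = q := by
  induction b, hab using Nat.le_induction with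
  | base => exact ⟨a, le_rfl, le_rfl, le_antisymm hb ha⟩
  | succ b hab ih =>
    by_cases hq : f b ≤ q
    · obtain ⟨m, h1, h2, h3⟩ := ih hq
      exact ⟨m, h1, by omega, h3⟩
    · exact ⟨b + 1, by omega, le_rfl, by have := hf b; omega⟩

theorem monotone_or_antitone_of_no_return (hup : ∀ t, f (t + 1) ≤ f t + 1)
    (hdown : ∀ t, f t ≤ f (t + 1) + 1)
    (hret : ∀ s m s', s ≤ m → m ≤ s' → f s' = f s → f m = f s) :
    Monotone f ∨ Antitone f := by
  by_contra h
  obtain ⟨hmono, hanti⟩ := not_or.1 h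
  obtain ⟨s, hs⟩ : ∃ s, f (s + 1) < f s := by
    by_contra! h'
    exact hmono (monotone_nat_of_le_succ h')
  obtain ⟨r, hr⟩ : ∃ r, f r < f (r + 1) := by
    by_contra! h'
    exact hanti (antitone_nat_of_succ_le h')
  rcases lt_or_gt_of_ne (show s ≠ r by rintro rfl; omega) with hsr | hrs
  · rcases le_or_gt (f s) (f (r + 1)) with h1 | h1
    · obtain ⟨m, hm, -, hfm⟩ :=
        exists_eq_of_succ_le_add_one hup (show s + 1 ≤ r + 1 by omega) (by omega) h1
      have := hret s (s + 1) m (by omega) hm hfm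
      omega
    · obtain ⟨m, -, hm, hfm⟩ := exists_eq_of_le_succ_add_one hdown (show s + 1 ≤ r by omega)
        (q := f (r + 1)) (by omega) (by have := hdown s; omega)
      have := hret m r (r + 1) hm (by omega) hfm.symm
      omega
  · rcases le_or_gt (f (s + 1)) (f r) with h1 | h1
    · obtain ⟨m, hm, -, hfm⟩ :=
        exists_eq_of_le_succ_add_one hdown (show r + 1 ≤ s + 1 by omega) h1 (by omega)
      have := hret r (r + 1) m (by omega) hm hfm
      omega
    · obtain ⟨m, -, hm, hfm⟩ := exists_eq_of_succ_le_add_one hup (show r + 1 ≤ s by omega)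
        (q := f (s + 1)) (by have := hup r; omega) (by omega)
      have := hret m s (s + 1) hm (by omega) hfm.symm
      omega

end DiscreteIVT

namespace Swap

variable {n : ℕ} {τ : Swap n} {u v u' v' : Fin n} {i j : ℕ}

theorem exchanges_comm : τ.exchanges u v ↔ τ.exchanges v u := Or.comm

theorem exchanges.eq_or_eq (h : τ.exchanges u v) (h' : τ.exchanges u' v') :
    (u = u' ∧ v = v') ∨ (u = v' ∧ v = u') := by
  unfold exchanges at h h'
  rcases h with ⟨rfl, rfl⟩ | ⟨rfl, rfl⟩ <;> rcases h' with ⟨h1, h2⟩ | ⟨h1, h2⟩ <;>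
    simp_all

theorem onEdge.eq (h : τ.onEdge i) (h' : τ.onEdge j) : i = j := by
  unfold onEdge at h h'
  omega

end Swap

namespace SwapModel

variable {n : ℕ}

theorem applySeq_append (σ : Fin n → Fin n) (φ ψ : List (Swap n)) :
    applySeq σ (φ ++ ψ) = applySeq (applySeq σ φ) ψ := by
  induction φ generalizing σ with
  | nil => rfl
  | cons τ φ ih => exact ih _

theorem bijective_applySeq {σ : Fin n → Fin n} (hσ : Bijective σ) (φ : List (Swap n)) :
    Bijective (applySeq σ φ) := by
  induction φ generalizing σ with
  | nil => exact hσ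
  | cons τ φ ih => exact ih (hσ.comp (Equiv.swap τ.a1 τ.a2).bijective)

def assignAt (σ0 : Fin n → Fin n) (φ : List (Swap n)) (t : ℕ) : Fin n → Fin n :=
  applySeq σ0 (φ.take t)

section

variable {M : SwapModel n} {σ0 : Fin n → Fin n} {φ : List (Swap n)} {τ : Swap n}
  {s m s' t : ℕ} {a : Fin n} {u v w x : Fin n}

theorem assignAt_of_length_le (h : φ.length ≤ t) : assignAt σ0 φ t = applySeq σ0 φ := by
  rw [assignAt, List.take_of_length_le h]

theorem assignAt_succ (h : φ[t]? = some τ) :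
    assignAt σ0 φ (t + 1) = applySwap (assignAt σ0 φ t) τ := by
  rw [assignAt, List.take_add_one, h, applySeq_append]
  rfl

theorem ValidSeq.admitted (hv : M.ValidSeq σ0 φ) (h : φ[t]? = some τ) :
    M.Admitted (assignAt σ0 φ t) τ := by
  induction φ generalizing σ0 t with
  | nil => simp at h
  | cons τ' φ ih =>
    cases t with
    | zero =>
      obtain rfl : τ' = τ := by simpa using h
      exact hv.1
    | succ t => exact ih hv.2 h

theorem Prefers.irrefl : ¬ M.Prefers a u u := by
  rintro ⟨k, l, hkl, hk, hl⟩
  have hklen : k < (M.pref a).length := (List.getElem?_eq_some_iff.1 hk).1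
  have := (List.getElem?_inj hklen (M.nodup a)).1 (hk.trans hl.symm)
  omega

theorem Prefers.trans (h1 : M.Prefers a u v) (h2 : M.Prefers a v w) : M.Prefers a u w := by
  obtain ⟨k1, l1, hkl1, hk1, hl1⟩ := h1
  obtain ⟨k2, l2, hkl2, hk2, hl2⟩ := h2
  have hl1len : l1 < (M.pref a).length := (List.getElem?_eq_some_iff.1 hl1).1
  have : l1 = k2 := (List.getElem?_inj hl1len (M.nodup a)).1 (hl1.trans hk2.symm)
  exact ⟨k1, l2, by omega, hk1, hl2⟩

theorem Prefers.asymm (h : M.Prefers a u v) : ¬ M.Prefers a v u :=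
  fun h' => Prefers.irrefl (h.trans h')

theorem ValidSeq.prefers_assignAt_succ (hv : M.ValidSeq σ0 φ) (t : ℕ)
    (hne : assignAt σ0 φ (t + 1) a ≠ assignAt σ0 φ t a) :
    M.Prefers a (assignAt σ0 φ (t + 1) a) (assignAt σ0 φ t a) := by
  cases h : φ[t]? with
  | none =>
    rw [List.getElem?_eq_none_iff] at h
    rw [assignAt_of_length_le h, assignAt_of_length_le (by omega)] at hne
    exact absurd rfl hne
  | some τ =>
    obtain ⟨h1, h2, -, hp1, hp2⟩ := hv.admitted h
    rw [assignAt_succ h] at hne ⊢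
    simp only [applySwap, comp_apply] at hne ⊢
    rcases eq_or_ne a τ.a1 with rfl | ha1
    · rwa [Equiv.swap_apply_left, h1, h2]
    rcases eq_or_ne a τ.a2 with rfl | ha2
    · rwa [Equiv.swap_apply_right, h1, h2]
    rw [Equiv.swap_apply_of_ne_of_ne ha1 ha2] at hne
    exact absurd rfl hne

theorem ValidSeq.prefers_of_le (hv : M.ValidSeq σ0 φ) (hss : s ≤ s')
    (hne : assignAt σ0 φ s' a ≠ assignAt σ0 φ s a) :
    M.Prefers a (assignAt σ0 φ s' a) (assignAt σ0 φ s a) := by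
  induction s', hss using Nat.le_induction with
  | base => exact absurd rfl hne
  | succ s' hss ih =>
    by_cases hstay : assignAt σ0 φ (s' + 1) a = assignAt σ0 φ s' a
    · rw [hstay] at hne ⊢
      exact ih hne
    have hstep := hv.prefers_assignAt_succ s' hstay
    by_cases hback : assignAt σ0 φ s' a = assignAt σ0 φ s a
    · rwa [hback] at hstep
    · exact hstep.trans (ih hback)

theorem ValidSeq.assignAt_eq_of_le_of_le (hv : M.ValidSeq σ0 φ) (h1 : s ≤ m) (h2 : m ≤ s')
    (h : assignAt σ0 φ s' a = assignAt σ0 φ s a) :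
    assignAt σ0 φ m a = assignAt σ0 φ s a := by
  by_contra hne
  have hne' : assignAt σ0 φ s' a ≠ assignAt σ0 φ m a := h ▸ Ne.symm hne
  have hpref := hv.prefers_of_le h2 hne'
  rw [h] at hpref
  exact (hv.prefers_of_le h1 hne).asymm hpref

/-- `u` itself witnesses the nonemptiness of `Fin n` that `invFun` needs. -/
noncomputable def posAt (σ0 : Fin n → Fin n) (φ : List (Swap n)) (t : ℕ) (u : Fin n) : ℕ :=
  haveI : Nonempty (Fin n) := ⟨u⟩
  (invFun (assignAt σ0 φ t) u : Fin n)

theorem posAt_eq_iff (hb : Bijective σ0) : posAt σ0 φ t u = a ↔ assignAt σ0 φ t a = u := by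
  have : Nonempty (Fin n) := ⟨u⟩
  have hbt := bijective_applySeq hb (φ.take t)
  rw [posAt, Fin.val_inj]
  constructor
  · rintro rfl
    exact invFun_eq (hbt.2 u)
  · rintro rfl
    exact leftInverse_invFun hbt.1 a

theorem posAt_lt (σ0 : Fin n → Fin n) (φ : List (Swap n)) (t : ℕ) (u : Fin n) :
    posAt σ0 φ t u < n :=
  Fin.isLt _

theorem posAt_injective (hb : Bijective σ0) (φ : List (Swap n)) (t : ℕ) :
    Injective (posAt σ0 φ t) := fun u v h => by
  rw [← (posAt_eq_iff hb (a := ⟨_, posAt_lt σ0 φ t u⟩)).1 rfl,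
    ← (posAt_eq_iff hb (a := ⟨_, posAt_lt σ0 φ t v⟩)).1 rfl]
  simp only [h]

theorem posAt_zero (hb : Bijective σ0) (h : σ0 a = u) : posAt σ0 φ 0 u = a :=
  (posAt_eq_iff hb).2 h

theorem posAt_length (hb : Bijective σ0) (h : applySeq σ0 φ a = u) :
    posAt σ0 φ φ.length u = a :=
  (posAt_eq_iff hb).2 (by rwa [assignAt_of_length_le le_rfl])

theorem posAt_of_length_le (h : φ.length ≤ t) : posAt σ0 φ t u = posAt σ0 φ φ.length u := by
  simp only [posAt, assignAt_of_length_le h, assignAt_of_length_le le_rfl]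

theorem ValidSeq.posAt_eq_of_le_of_le (hv : M.ValidSeq σ0 φ) (hb : Bijective σ0) (h1 : s ≤ m)
    (h2 : m ≤ s') (h : posAt σ0 φ s' u = posAt σ0 φ s u) :
    posAt σ0 φ m u = posAt σ0 φ s u := by
  set a : Fin n := ⟨posAt σ0 φ s u, posAt_lt σ0 φ s u⟩
  have hs : assignAt σ0 φ s a = u := (posAt_eq_iff hb).1 rfl
  have hs' : assignAt σ0 φ s' a = u := (posAt_eq_iff hb).1 h
  exact (posAt_eq_iff hb (a := a)).2
    (by rw [hv.assignAt_eq_of_le_of_le h1 h2 (hs'.trans hs.symm), hs])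

structure IsPathRun (M : SwapModel n) (σ0 : Fin n → Fin n) (φ : List (Swap n)) : Prop where
  graph_eq : M.G = pathGraph' n
  bijective : Bijective σ0
  valid : M.ValidSeq σ0 φ

structure CrossesAt (σ0 : Fin n → Fin n) (φ : List (Swap n)) (t c : ℕ) (u v : Fin n) :
    Prop where
  exists_swap : ∃ τ, φ[t]? = some τ ∧ τ.exchanges u v ∧ τ.onEdge c
  left_before : posAt σ0 φ t u = c
  right_before : posAt σ0 φ t v = c + 1
  left_after : posAt σ0 φ (t + 1) u = c + 1
  right_after : posAt σ0 φ (t + 1) v = c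

variable {c c' i j r t' : ℕ}

theorem CrossesAt.lt_length (h : CrossesAt σ0 φ t c u v) : t < φ.length := by
  obtain ⟨τ, hτ, -⟩ := h.exists_swap
  exact (List.getElem?_eq_some_iff.1 hτ).1

namespace IsPathRun

theorem exists_crossesAt (hp : M.IsPathRun σ0 φ) (ht : φ[t]? = some τ) :
    ∃ c uL uR, CrossesAt σ0 φ t c uL uR ∧ τ.exchanges uL uR ∧ τ.onEdge c ∧
      ∀ u, u ≠ uL → u ≠ uR → posAt σ0 φ (t + 1) u = posAt σ0 φ t u := by
  obtain ⟨h1, h2, hadj, -, -⟩ := hp.valid.admitted ht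
  have hb := hp.bijective
  have hsucc : ∀ {u} {a : Fin n}, posAt σ0 φ (t + 1) u = a ↔
      assignAt σ0 φ t (Equiv.swap τ.a1 τ.a2 a) = u := by
    intro u a
    rw [posAt_eq_iff hb, assignAt_succ ht]
    rfl
  have hpos1 : posAt σ0 φ t τ.o1 = τ.a1 := (posAt_eq_iff hb).2 h1
  have hpos2 : posAt σ0 φ t τ.o2 = τ.a2 := (posAt_eq_iff hb).2 h2
  have hpos1' : posAt σ0 φ (t + 1) τ.o1 = τ.a2 := hsucc.2 (by rwa [Equiv.swap_apply_right])
  have hpos2' : posAt σ0 φ (t + 1) τ.o2 = τ.a1 := hsucc.2 (by rwa [Equiv.swap_apply_left])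
  have hfix : ∀ u, u ≠ τ.o1 → u ≠ τ.o2 → posAt σ0 φ (t + 1) u = posAt σ0 φ t u := by
    intro u hu1 hu2
    set p : Fin n := ⟨posAt σ0 φ t u, posAt_lt σ0 φ t u⟩
    have hpu : assignAt σ0 φ t p = u := (posAt_eq_iff hb).1 rfl
    have hp1 : p ≠ τ.a1 := by rintro hp'; exact hu1 (by rw [← hpu, hp', h1])
    have hp2 : p ≠ τ.a2 := by rintro hp'; exact hu2 (by rw [← hpu, hp', h2])
    exact (hsucc (a := p)).2 (by rwa [Equiv.swap_apply_of_ne_of_ne hp1 hp2])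
  rw [hp.graph_eq] at hadj
  rcases hadj with hadj | hadj
  · exact ⟨τ.a1, τ.o1, τ.o2,
      ⟨⟨τ, ht, Or.inl ⟨rfl, rfl⟩, Or.inl ⟨rfl, hadj.symm⟩⟩, hpos1, by omega, by omega, hpos2'⟩,
      Or.inl ⟨rfl, rfl⟩, Or.inl ⟨rfl, hadj.symm⟩, hfix⟩
  · exact ⟨τ.a2, τ.o2, τ.o1,
      ⟨⟨τ, ht, Or.inr ⟨rfl, rfl⟩, Or.inr ⟨rfl, hadj.symm⟩⟩, hpos2, by omega, by omega, hpos1'⟩,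
      Or.inr ⟨rfl, rfl⟩, Or.inr ⟨rfl, hadj.symm⟩,
      fun u hu2 hu1 => hfix u hu1 hu2⟩

theorem crossesAt_or_crossesAt (hp : M.IsPathRun σ0 φ) (ht : φ[t]? = some τ)
    (hex : τ.exchanges u v) (he : τ.onEdge j) :
    CrossesAt σ0 φ t j u v ∨ CrossesAt σ0 φ t j v u := by
  obtain ⟨c, uL, uR, hc, hexc, hec, -⟩ := hp.exists_crossesAt ht
  obtain rfl := he.eq hec
  rcases hex.eq_or_eq hexc with ⟨rfl, rfl⟩ | ⟨rfl, rfl⟩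
  · exact Or.inl hc
  · exact Or.inr hc

theorem posAt_succ_eq_or_crossesAt (hp : M.IsPathRun σ0 φ) (t : ℕ) (u : Fin n) :
    posAt σ0 φ (t + 1) u = posAt σ0 φ t u ∨ (∃ c v, CrossesAt σ0 φ t c u v) ∨
      ∃ c v, CrossesAt σ0 φ t c v u := by
  cases ht : φ[t]? with
  | none =>
    rw [List.getElem?_eq_none_iff] at ht
    exact Or.inl (by rw [posAt_of_length_le ht, posAt_of_length_le (by omega)])
  | some τ =>
    obtain ⟨c, uL, uR, hc, -, -, hfix⟩ := hp.exists_crossesAt ht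
    by_cases hL : u = uL
    · exact Or.inr (Or.inl ⟨c, uR, hL ▸ hc⟩)
    by_cases hR : u = uR
    · exact Or.inr (Or.inr ⟨c, uL, hR ▸ hc⟩)
    exact Or.inl (hfix u hL hR)

theorem posAt_succ_le (hp : M.IsPathRun σ0 φ) (t : ℕ) (u : Fin n) :
    posAt σ0 φ (t + 1) u ≤ posAt σ0 φ t u + 1 := by
  rcases hp.posAt_succ_eq_or_crossesAt t u with h | ⟨c, v, h⟩ | ⟨c, v, h⟩
  · omega
  · have := h.left_before; have := h.left_after; omega
  · have := h.right_before; have := h.right_after; omega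

theorem posAt_le_succ (hp : M.IsPathRun σ0 φ) (t : ℕ) (u : Fin n) :
    posAt σ0 φ t u ≤ posAt σ0 φ (t + 1) u + 1 := by
  rcases hp.posAt_succ_eq_or_crossesAt t u with h | ⟨c, v, h⟩ | ⟨c, v, h⟩
  · omega
  · have := h.left_before; have := h.left_after; omega
  · have := h.right_before; have := h.right_after; omega

theorem monotone_or_antitone (hp : M.IsPathRun σ0 φ) (u : Fin n) :
    Monotone (posAt σ0 φ · u) ∨ Antitone (posAt σ0 φ · u) :=
  monotone_or_antitone_of_no_return (hp.posAt_succ_le · u) (hp.posAt_le_succ · u)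
    fun _ _ _ h1 h2 h => hp.valid.posAt_eq_of_le_of_le hp.bijective h1 h2 h

end IsPathRun

namespace CrossesAt

theorem monotone_left (hp : M.IsPathRun σ0 φ) (h : CrossesAt σ0 φ t c u v) :
    Monotone (posAt σ0 φ · u) := by
  refine (hp.monotone_or_antitone u).resolve_right fun hanti => ?_
  have : posAt σ0 φ (t + 1) u ≤ posAt σ0 φ t u := hanti (Nat.le_succ t)
  have := h.left_before; have := h.left_after
  omega

theorem antitone_right (hp : M.IsPathRun σ0 φ) (h : CrossesAt σ0 φ t c u v) :
    Antitone (posAt σ0 φ · v) := by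
  refine (hp.monotone_or_antitone v).resolve_left fun hmono => ?_
  have : posAt σ0 φ t v ≤ posAt σ0 φ (t + 1) v := hmono (Nat.le_succ t)
  have := h.right_before; have := h.right_after
  omega

theorem not_crossesAt_of_right (hp : M.IsPathRun σ0 φ) (h : CrossesAt σ0 φ t c u v) :
    ¬ CrossesAt σ0 φ t' c' v w := fun h' => by
  have : posAt σ0 φ (t' + 1) v ≤ posAt σ0 φ t' v := h.antitone_right hp (Nat.le_succ t')
  have := h'.left_before; have := h'.left_after
  omega

theorem unique (hp : M.IsPathRun σ0 φ) (h : CrossesAt σ0 φ t c u v)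
    (h' : CrossesAt σ0 φ t' c' u v) : t = t' ∧ c = c' := by
  have key : ∀ {t c t' c'},
      CrossesAt σ0 φ t c u v → CrossesAt σ0 φ t' c' u v → ¬ t < t' := by
    intro t c t' c' h h' hlt
    have : posAt σ0 φ (t + 1) u ≤ posAt σ0 φ t' u := h.monotone_left hp hlt
    have : posAt σ0 φ t' v ≤ posAt σ0 φ (t + 1) v := h.antitone_right hp hlt
    have := h.left_after; have := h.right_after; have := h'.left_before; have := h'.right_before
    omega
  obtain rfl : t = t' := by have := key h h'; have := key h' h; omega
  exact ⟨rfl, h.left_before.symm.trans h'.left_before⟩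

theorem left_unique (hp : M.IsPathRun σ0 φ) (h : CrossesAt σ0 φ t c u x)
    (h' : CrossesAt σ0 φ t' c v x) : u = v := by
  have key : ∀ {t t' u v},
      CrossesAt σ0 φ t c u x → CrossesAt σ0 φ t' c v x → ¬ t < t' := by
    intro t t' u v h h' hlt
    have : posAt σ0 φ t' x ≤ posAt σ0 φ (t + 1) x := h.antitone_right hp hlt
    have := h.right_after; have := h'.right_before
    omega
  obtain rfl : t = t' := by have := key h h'; have := key h' h; omega
  exact posAt_injective hp.bijective φ t (h.left_before.trans h'.left_before.symm)

end CrossesAt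

namespace IsPathRun

theorem exists_crossesAt_of_lt_succ (hp : M.IsPathRun σ0 φ)
    (h1 : posAt σ0 φ t u < posAt σ0 φ t v)
    (h2 : posAt σ0 φ (t + 1) v < posAt σ0 φ (t + 1) u) : ∃ c, CrossesAt σ0 φ t c u v := by
  cases ht : φ[t]? with
  | none =>
    rw [List.getElem?_eq_none_iff] at ht
    simp only [posAt_of_length_le ht, posAt_of_length_le (Nat.le_succ_of_le ht)] at h1 h2
    omega
  | some τ =>
    obtain ⟨c, uL, uR, hc, -, -, hfix⟩ := hp.exists_crossesAt ht
    have key : ∀ o, o = uL ∨ o = uR ∨ posAt σ0 φ (t + 1) o = posAt σ0 φ t o := fun o => by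
      by_cases hL : o = uL
      · exact Or.inl hL
      by_cases hR : o = uR
      · exact Or.inr (Or.inl hR)
      exact Or.inr (Or.inr (hfix o hL hR))
    have := hc.left_before; have := hc.right_before; have := hc.left_after; have := hc.right_after
    rcases key u with rfl | rfl | hu <;> rcases key v with rfl | rfl | hv <;>
      first | exact ⟨c, hc⟩ | omega

theorem exists_crossesAt_of_lt_of_lt (hp : M.IsPathRun σ0 φ) {a b : ℕ} (hab : a ≤ b)
    (ha : posAt σ0 φ a u < posAt σ0 φ a v) (hb : posAt σ0 φ b v < posAt σ0 φ b u) :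
    ∃ r c, a ≤ r ∧ r < b ∧ CrossesAt σ0 φ r c u v := by
  have huv : u ≠ v := by rintro rfl; omega
  induction b, hab using Nat.le_induction with
  | base => omega
  | succ b hab ih =>
    by_cases hc : posAt σ0 φ b v < posAt σ0 φ b u
    · obtain ⟨r, c, h1, h2, h3⟩ := ih hc
      exact ⟨r, c, h1, by omega, h3⟩
    · have := (posAt_injective hp.bijective φ b).ne huv
      obtain ⟨c, hc'⟩ := hp.exists_crossesAt_of_lt_succ (by omega) hb
      exact ⟨b, c, hab, by omega, hc'⟩

theorem posAt_lt_posAt_of_monotone (hp : M.IsPathRun σ0 φ) (hu : Monotone (posAt σ0 φ · u))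
    (hv : Monotone (posAt σ0 φ · v)) {t₀ : ℕ} (h : posAt σ0 φ t₀ u < posAt σ0 φ t₀ v)
    (t : ℕ) :
    posAt σ0 φ t u < posAt σ0 φ t v := by
  have huv : u ≠ v := by rintro rfl; omega
  rcases lt_trichotomy (posAt σ0 φ t u) (posAt σ0 φ t v) with hlt | heq | hgt
  · exact hlt
  · exact absurd (posAt_injective hp.bijective φ t heq) huv
  · exfalso
    rcases le_total t t₀ with htt | htt
    · obtain ⟨r, c, -, -, hr⟩ := hp.exists_crossesAt_of_lt_of_lt htt hgt h
      have : posAt σ0 φ r u ≤ posAt σ0 φ (r + 1) u := hu (Nat.le_succ r)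
      have := hr.right_before; have := hr.right_after
      omega
    · obtain ⟨r, c, -, -, hr⟩ := hp.exists_crossesAt_of_lt_of_lt htt h hgt
      have : posAt σ0 φ r v ≤ posAt σ0 φ (r + 1) v := hv (Nat.le_succ r)
      have := hr.right_before; have := hr.right_after
      omega

theorem exists_crossesAt_of_lt_of_le (hp : M.IsPathRun σ0 φ) {a b : ℕ} (hab : a ≤ b)
    (ha : i < posAt σ0 φ a x) (hb : posAt σ0 φ b x ≤ i) :
    ∃ r v, CrossesAt σ0 φ r i v x := by
  obtain ⟨r, -, -, h1, h2⟩ :=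
    exists_lt_le_succ (f := (posAt σ0 φ · x)) (q := i + 1) hab ha (by omega)
  have := hp.posAt_le_succ r x
  rcases hp.posAt_succ_eq_or_crossesAt r x with h | ⟨c, v, h⟩ | ⟨c, v, h⟩
  · omega
  · have := h.left_before; have := h.left_after
    omega
  · obtain rfl : c = i := by have := h.right_before; have := h.right_after; omega
    exact ⟨r, v, h⟩

end IsPathRun

variable {i' r' q q' μ μ' : ℕ} {v' y z : Fin n}

theorem CrossesAt.posAt_lt_of_lt (hp : M.IsPathRun σ0 φ) (h : CrossesAt σ0 φ r i v x)
    (h' : CrossesAt σ0 φ r' i' v' x) (hii : i < i') (t : ℕ) :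
    posAt σ0 φ t v < posAt σ0 φ t v' := by
  have hr : r' < r := by
    by_contra! hle
    have : posAt σ0 φ r' x ≤ posAt σ0 φ r x := h.antitone_right hp hle
    have := h.right_before; have := h'.right_before
    omega
  refine hp.posAt_lt_posAt_of_monotone (h.monotone_left hp) (h'.monotone_left hp) (t₀ := r') ?_ t
  have : posAt σ0 φ r' v ≤ posAt σ0 φ r v := h.monotone_left hp hr.le
  have := h.left_before; have := h'.left_before
  omega

theorem CrossesAt.edge_lt_of_posAt_lt (hp : M.IsPathRun σ0 φ) (h : CrossesAt σ0 φ q μ v y)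
    (h' : CrossesAt σ0 φ q' μ' v' y) (hvv : ∀ t, posAt σ0 φ t v < posAt σ0 φ t v') :
    μ < μ' := by
  have := h.left_before; have := h.right_before; have := h.left_after; have := h.right_after
  have := h'.left_before; have := h'.right_before
  have hq : q' < q := by
    by_contra! hle
    rcases hle.eq_or_lt with rfl | hlt
    · have := hvv q
      omega
    · have : posAt σ0 φ (q + 1) v ≤ posAt σ0 φ q' v := h.monotone_left hp hlt
      have : posAt σ0 φ q' y ≤ posAt σ0 φ (q + 1) y := h.antitone_right hp hlt
      have := hvv q'
      omega
  have : posAt σ0 φ q y ≤ posAt σ0 φ (q' + 1) y := h.antitone_right hp hq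
  have := h'.right_after
  omega

theorem IsPathRun.edge_le_of_crossesAt {φ' : List (Swap n)} (hp : M.IsPathRun σ0 φ)
    (hp' : M.IsPathRun σ0 φ') {I : Fin n} (hI : applySeq σ0 φ I = x)
    (hI' : applySeq σ0 φ' I = x) (h : CrossesAt σ0 φ r j w x)
    (h' : CrossesAt σ0 φ' r' j' w x) :
    j' ≤ j := by
  by_contra! hlt
  have := h.left_before; have := h.right_before; have := h.right_after
  have := h'.left_before; have := h'.right_after
  have hα : j + 1 < n := by have := posAt_lt σ0 φ r x; omega
  let α : Fin n := ⟨j + 1, hα⟩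
  have hwx : w ≠ x := by rintro rfl; omega
  -- the agent `j + 1` trades `x` for `w` in `φ`, but holds `w` before `x` in `φ'`
  have hpref : M.Prefers α w x := by
    have hx : assignAt σ0 φ r α = x := (posAt_eq_iff hp.bijective).1 h.right_before
    have hw : assignAt σ0 φ (r + 1) α = w := (posAt_eq_iff hp.bijective).1 h.left_after
    have := hp.valid.prefers_of_le (Nat.le_succ r) (by rw [hx, hw]; exact hwx)
    rwa [hx, hw] at this
  have hw0 : posAt σ0 φ' 0 w ≤ posAt σ0 φ r w := h.monotone_left hp (Nat.zero_le r)
  obtain ⟨t₁, -, ht₁, hwt₁⟩ := exists_eq_of_succ_le_add_one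
    (f := (posAt σ0 φ' · w)) (hp'.posAt_succ_le · w)
    (Nat.zero_le r') (q := j + 1) (by omega) (by omega)
  have hxI : posAt σ0 φ φ.length x ≤ posAt σ0 φ (r + 1) x := h.antitone_right hp h.lt_length
  rw [posAt_length hp.bijective hI] at hxI
  have hxI' := posAt_length (u := x) hp'.bijective hI'
  obtain ⟨t₂, ht₂, -, hxt₂⟩ := exists_eq_of_le_succ_add_one
    (f := (posAt σ0 φ' · x)) (hp'.posAt_le_succ · x)
    (show r' + 1 ≤ φ'.length from h'.lt_length) (q := j + 1) (by omega) (by omega)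
  have hw' : assignAt σ0 φ' t₁ α = w := (posAt_eq_iff hp'.bijective).1 hwt₁
  have hx' : assignAt σ0 φ' t₂ α = x := (posAt_eq_iff hp'.bijective).1 hxt₂
  have := hp'.valid.prefers_of_le (show t₁ ≤ t₂ by omega) (by rw [hw', hx']; exact hwx.symm)
  rw [hw', hx'] at this
  exact hpref.asymm this

theorem IsPathRun.add_sub_le_of_crossesAt (hp : M.IsPathRun σ0 φ) {I tz tw k k' e : ℕ}
    (hzx : CrossesAt σ0 φ tz I z x) (hzy : CrossesAt σ0 φ k e z y)
    (hwx : CrossesAt σ0 φ tw j w x) (hwy : CrossesAt σ0 φ k' c w y) (hIj : I ≤ j) :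
    e + (j - I) ≤ c := by
  have hw0 : posAt σ0 φ 0 w < posAt σ0 φ 0 y := by
    have : posAt σ0 φ 0 w ≤ posAt σ0 φ k' w := hwy.monotone_left hp (Nat.zero_le k')
    have : posAt σ0 φ k' y ≤ posAt σ0 φ 0 y := hwy.antitone_right hp (Nat.zero_le k')
    have := hwy.left_before; have := hwy.right_before
    omega
  have htw : tw ≤ tz + 1 := by
    by_contra! hlt
    have : posAt σ0 φ tw x ≤ posAt σ0 φ (tz + 1) x := hzx.antitone_right hp hlt.le
    have := hwx.right_before; have := hzx.right_after
    omega
  have key : ∀ i, I ≤ i → i ≤ j →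
      ∃ r v q μ,
        CrossesAt σ0 φ r i v x ∧ CrossesAt σ0 φ q μ v y ∧ e + (i - I) ≤ μ := by
    intro i hIi
    induction i, hIi using Nat.le_induction with
    | base => exact fun _ => ⟨tz, z, k, e, hzx, hzy, by omega⟩
    | succ i hIi ih =>
      intro hij
      obtain ⟨r, v, q, μ, hvx, hvy, hμ⟩ := ih (by omega)
      obtain ⟨r', v', hv'x⟩ := hp.exists_crossesAt_of_lt_of_le htw (x := x) (i := i + 1)
        (by have := hwx.right_before; omega) (by have := hzx.right_after; omega)
      have hvv' := hvx.posAt_lt_of_lt hp hv'x (by omega)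
      have hv'w : posAt σ0 φ 0 v' ≤ posAt σ0 φ 0 w := by
        rcases hij.eq_or_lt with rfl | hlt
        · rw [hv'x.left_unique hp hwx]
        · exact (hv'x.posAt_lt_of_lt hp hwx hlt 0).le
      have := hvv' (q + 1); have := hvy.left_after; have := hvy.right_after
      obtain ⟨q', μ', -, -, hv'y⟩ := hp.exists_crossesAt_of_lt_of_lt (u := v') (v := y)
        (Nat.zero_le (q + 1)) (by omega) (by omega)
      have := hvy.edge_lt_of_posAt_lt hp hv'y hvv'
      exact ⟨r', v', q', μ', hv'x, hv'y, by omega⟩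
  obtain ⟨r, v, q, μ, hvx, hvy, hμ⟩ := key j hIj le_rfl
  obtain rfl := hvx.left_unique hp hwx
  obtain ⟨-, rfl⟩ := hvy.unique hp hwy
  exact hμ

end

section Target

variable {N : ℕ} {M : SwapModel (N + 1)} {σ0 : Fin (N + 1) → Fin (N + 1)}
  {φ : List (Swap (N + 1))} {I x y z w : Fin (N + 1)} {c j r t : ℕ}

theorem IsPathRun.not_crossesAt_of_eq_last (hp : M.IsPathRun σ0 φ) (hx : σ0 (Fin.last N) = x)
    {v : Fin (N + 1)} : ¬ CrossesAt σ0 φ t c x v := fun h => by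
  have : posAt σ0 φ 0 x ≤ posAt σ0 φ t x := h.monotone_left hp (Nat.zero_le t)
  have hx0 := posAt_zero (φ := φ) hp.bijective hx
  rw [Fin.val_last] at hx0
  have := posAt_lt σ0 φ t v
  have := h.left_before; have := h.right_before
  omega

theorem IsPathRun.crossesAt_of_exchanges_last (hp : M.IsPathRun σ0 φ)
    (hx : σ0 (Fin.last N) = x) {τ : Swap (N + 1)} (hmem : τ ∈ φ) (hex : τ.exchanges x w)
    (he : τ.onEdge j) : ∃ r, CrossesAt σ0 φ r j w x := by
  obtain ⟨r, hr, rfl⟩ := List.mem_iff_getElem.1 hmem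
  exact ⟨r, (hp.crossesAt_or_crossesAt (List.getElem?_eq_getElem hr) hex he).resolve_left
    (hp.not_crossesAt_of_eq_last hx)⟩

theorem IsPathRun.hasType_of_crossesAt (hp : M.IsPathRun σ0 φ) (hx : σ0 (Fin.last N) = x)
    (hI : applySeq σ0 φ I = x) (h : CrossesAt σ0 φ r j w x) :
    M.HasType σ0 I x w (j + 1 - I) := by
  have hIj : (I : ℕ) ≤ j := by
    have : posAt σ0 φ φ.length x ≤ posAt σ0 φ (r + 1) x := h.antitone_right hp h.lt_length
    rwa [posAt_length hp.bijective hI, h.right_after] at this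
  have hidx : (I : ℕ) + (j + 1 - I) - 1 = j := by omega
  refine Or.inr ⟨by omega, ?_, ?_⟩ <;> rw [hidx]
  · obtain ⟨τ, hτ, hex, he⟩ := h.exists_swap
    exact ⟨φ, hp.valid, hI, τ, List.mem_of_getElem? hτ, Swap.exchanges_comm.1 hex, he⟩
  · rintro j' ⟨ψ, hψ, hψI, τ, hτ, hex, he⟩
    have hpψ : M.IsPathRun σ0 ψ := ⟨hp.graph_eq, hp.bijective, hψ⟩
    obtain ⟨r', h'⟩ := hpψ.crossesAt_of_exchanges_last hx hτ hex he
    exact le_antisymm (hp.edge_le_of_crossesAt hpψ hI hψI h h')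
      (hpψ.edge_le_of_crossesAt hp hψI hI h' h)

theorem Solution.crossesAt_last (hsol : M.Solution σ0 I x z φ) (hp : M.IsPathRun σ0 φ)
    (hx : σ0 (Fin.last N) = x) : CrossesAt σ0 φ (φ.length - 1) I z x := by
  obtain ⟨-, hI, φ₀, τ, rfl, hτ⟩ := hsol
  have ht : (φ₀ ++ [τ])[(φ₀ ++ [τ]).length - 1]? = some τ := by simp
  have hex : τ.exchanges z x := by
    rcases hτ with ⟨-, h1, h2⟩ | ⟨-, h2, h1⟩
    · exact Or.inl ⟨h1, h2⟩
    · exact Or.inr ⟨h1, h2⟩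
  obtain ⟨c, uL, uR, hc, hexc, -, -⟩ := hp.exists_crossesAt ht
  rcases hex.eq_or_eq hexc with ⟨rfl, rfl⟩ | ⟨rfl, rfl⟩
  · obtain rfl : c = I := by
      have := hc.right_after
      rw [Nat.sub_add_cancel (by simp), posAt_length hp.bijective hI] at this
      exact this.symm
    exact hc
  · exact (hp.not_crossesAt_of_eq_last hx hc).elim

theorem IsPathRun.exists_crossesAt_of_crossesAt_of_lt (hp : M.IsPathRun σ0 φ)
    (hx : σ0 (Fin.last N) = x) (hI : applySeq σ0 φ I = x) {tz k k' e : ℕ}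
    (hzx : CrossesAt σ0 φ tz I z x) (hzy : CrossesAt σ0 φ k e z y)
    (hwy : CrossesAt σ0 φ k' c w y) (hk : k' < k) :
    ∃ r j, (I : ℕ) < j ∧ CrossesAt σ0 φ r j w x := by
  have hwz : w ≠ z := by
    rintro rfl
    have := (hwy.unique hp hzy).1
    omega
  have hzw : ∀ t, posAt σ0 φ t z < posAt σ0 φ t w := by
    refine hp.posAt_lt_posAt_of_monotone (hzx.monotone_left hp) (hwy.monotone_left hp)
      (t₀ := k') ?_
    have : posAt σ0 φ k' z ≤ posAt σ0 φ k z := hzx.monotone_left hp hk.le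
    have : posAt σ0 φ k y ≤ posAt σ0 φ (k' + 1) y := hzy.antitone_right hp hk
    have := hzy.left_before; have := hzy.right_before
    have := hwy.left_before; have := hwy.right_after
    omega
  have hw0 : posAt σ0 φ 0 w < posAt σ0 φ 0 x := by
    have hwx : w ≠ x := by rintro rfl; exact hp.not_crossesAt_of_eq_last hx hwy
    have := (posAt_injective hp.bijective φ 0).ne hwx
    have := posAt_lt σ0 φ 0 w
    have hx0 := posAt_zero (φ := φ) hp.bijective hx
    rw [Fin.val_last] at hx0
    omega
  have : posAt σ0 φ (tz + 1) z ≤ posAt σ0 φ φ.length z := hzx.monotone_left hp hzx.lt_length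
  have := hzw φ.length; have := hzx.left_after
  have hxL := posAt_length (u := x) hp.bijective hI
  obtain ⟨r, j, -, hrL, hwx⟩ :=
    hp.exists_crossesAt_of_lt_of_lt (Nat.zero_le φ.length) hw0 (by omega)
  refine ⟨r, j, ?_, hwx⟩
  have : posAt σ0 φ φ.length x ≤ posAt σ0 φ (r + 1) x := hwx.antitone_right hp hrL
  have := hwx.right_after
  have hjI : j ≠ I := by rintro rfl; exact hwz (hwx.left_unique hp hzx)
  omega

end Target

end SwapModel

theorem statement12_general (N : ℕ) (M : SwapModel (N + 1)) (hG : M.G = pathGraph' (N + 1))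
    (σ0 : Fin (N + 1) → Fin (N + 1)) (hσ0 : M.IsAssignment σ0)
    (x : Fin (N + 1)) (hx : σ0 (Fin.last N) = x)
    (I : Fin (N + 1))
    (z : Fin (N + 1)) (φ : List (Swap (N + 1))) (hsol : M.Solution σ0 I x z φ)
    (y : Fin (N + 1)) (jA : Fin (N + 1)) (hjA : σ0 jA = y)
    (e k : ℕ) (τk : Swap (N + 1)) (hk : φ[k]? = some τk)
    (hky : τk.exchanges y z) (hke : τk.onEdge e) :
    ∀ w : Fin (N + 1),
      (∃ k'', k'' < k ∧ ∃ τ : Swap (N + 1), φ[k'']? = some τ ∧ τ.exchanges w y) →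
      ∃ t, 2 ≤ t ∧ t ≤ jA.val - e ∧ M.HasType σ0 I x w t := by
  rintro w ⟨k', hk', τ', hτ', hwy'⟩
  have hp : M.IsPathRun σ0 φ := ⟨hG, hσ0.1, hsol.1⟩
  have hzx := hsol.crossesAt_last hp hx
  have hzy : SwapModel.CrossesAt σ0 φ k e z y :=
    (hp.crossesAt_or_crossesAt hk hky hke).resolve_left fun h => h.not_crossesAt_of_right hp hzx
  obtain ⟨c, hwy⟩ : ∃ c, SwapModel.CrossesAt σ0 φ k' c w y := by
    obtain ⟨c, uL, uR, hc, hexc, -, -⟩ := hp.exists_crossesAt hτ'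
    rcases hwy'.eq_or_eq hexc with ⟨rfl, rfl⟩ | ⟨rfl, rfl⟩
    · exact ⟨c, hc⟩
    · exact (hzy.not_crossesAt_of_right hp hc).elim
  obtain ⟨r, j, hIj, hwx⟩ :=
    hp.exists_crossesAt_of_crossesAt_of_lt hx hsol.2.1 hzx hzy hwy hk'
  have hcjA : c + 1 ≤ jA := by
    have : SwapModel.posAt σ0 φ k' y ≤ SwapModel.posAt σ0 φ 0 y :=
      hwy.antitone_right hp (Nat.zero_le k')
    rw [hwy.right_before, SwapModel.posAt_zero hσ0.1 hjA] at this
    exact this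
  have := hp.add_sub_le_of_crossesAt hzx hzy hwx hwy hIj.le
  exact ⟨j + 1 - I, by omega, by omega, hp.hasType_of_crossesAt hx hsol.2.1 hwx⟩

/-- Lemma 3 (i).  The underlying graph is the path on agents
`0, 1, …, N`, the target object `x` is initially held by the last agent, and the
target agent `I` is not the last agent.  Consider a solution `φ` (a sequence of swaps
in which agent `I` eventually obtains `x`, with `z` the object agent `I` trades in
the last swap).  Suppose object `y`, initially held by agent `jA`, is swapped with `z`
over the edge with left endpoint `e` at step `k` of `φ`, before `z` reaches agent `I`.
Then every object `w` that is swapped with `y` before the swap of `y` and `z` has a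
type belonging to `{2, 3, …, jA - e}` (which, in the paper's 1-based labelling with
edge `{i-1, i}` and holder `j`, is the set `{2, 3, …, j - i + 1}`). -/
theorem statement12 (N : ℕ) (M : SwapModel (N + 1)) (hG : M.G = pathGraph' (N + 1))
    (σ0 : Fin (N + 1) → Fin (N + 1)) (hσ0 : M.IsAssignment σ0)
    (x : Fin (N + 1)) (hx : σ0 (Fin.last N) = x)
    (I : Fin (N + 1)) (hI : I < Fin.last N)
    (z : Fin (N + 1)) (φ : List (Swap (N + 1))) (hsol : M.Solution σ0 I x z φ)
    (y : Fin (N + 1)) (jA : Fin (N + 1)) (hjA : σ0 jA = y)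
    (e k : ℕ) (τk : Swap (N + 1)) (hk : φ[k]? = some τk)
    (hky : τk.exchanges y z) (hke : τk.onEdge e)
    (hbefore : ∀ k', k' ≤ k → SwapModel.applySeq σ0 (φ.take k') I ≠ z) :
    ∀ w : Fin (N + 1),
      (∃ k'', k'' < k ∧ ∃ τ : Swap (N + 1), φ[k'']? = some τ ∧ τ.exchanges w y) →
      ∃ t, 2 ≤ t ∧ t ≤ jA.val - e ∧ M.HasType σ0 I x w t :=
  statement12_general N M hG σ0 hσ0 x hx I z φ hsol y jA hjA e k τk hk hky hke
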